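/- arXiv:2412.06242 — 4 statements merged into one kernel-verified Lean document; each statement's English description precedes it below -/
import Mathlib

section
/- Let f : [-1,1] → ℝ be continuous and define y(x) = ∫_{ξ=-1}^{1} G(x,ξ) f(ξ) dξ. Then y(-1) = 0, y(1) = 0, and y is twice differentiable on (-1,1) with y''(x) = f(x) for every x ∈ (-1,1). -/
open MeasureTheory Set Filter

/-- The Green function for `y'' = f` on `[-1,1]` with zero Dirichlet boundary conditions. -/
noncomputable def greenG (x ξ : ℝ) : ℝ :=
  if x ≤ ξ then (x + 1) * (ξ - 1) / 2 else (x - 1) * (ξ + 1) / 2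

theorem stmt_0 (f : ℝ → ℝ) (hf : ContinuousOn f (Set.Icc (-1 : ℝ) 1))
    (y : ℝ → ℝ) (hy : ∀ x : ℝ, y x = ∫ ξ in (-1 : ℝ)..1, greenG x ξ * f ξ) :
    y (-1) = 0 ∧ y 1 = 0 ∧
      ∃ y' : ℝ → ℝ,
        (∀ x ∈ Set.Ioo (-1 : ℝ) 1, HasDerivAt y (y' x) x) ∧
        (∀ x ∈ Set.Ioo (-1 : ℝ) 1, HasDerivAt y' (f x) x) := by
  classical
  set g1 : ℝ → ℝ := fun ξ => (ξ + 1) * f ξ with hg1def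
  set g2 : ℝ → ℝ := fun ξ => (ξ - 1) * f ξ with hg2def
  have hg1 : ContinuousOn g1 (Icc (-1 : ℝ) 1) :=
    ((continuous_id.add continuous_const).continuousOn).mul hf
  have hg2 : ContinuousOn g2 (Icc (-1 : ℝ) 1) :=
    ((continuous_id.sub continuous_const).continuousOn).mul hf
  set A : ℝ → ℝ := fun t => ∫ ξ in (-1 : ℝ)..t, g1 ξ with hAdef
  set B : ℝ → ℝ := fun t => ∫ ξ in t..(1 : ℝ), g2 ξ with hBdef
  -- key pointwise identity for greenG
  have hG : ∀ x ξ : ℝ, greenG x ξ * f ξ =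
      if ξ ≤ x then (x - 1) / 2 * g1 ξ else (x + 1) / 2 * g2 ξ := by
    intro x ξ
    unfold greenG
    rcases le_or_gt x ξ with h | h
    · rw [if_pos h]
      rcases le_or_gt ξ x with h' | h'
      · have hxe : ξ = x := le_antisymm h' h
        subst hxe
        rw [if_pos le_rfl]
        show _ = (ξ - 1) / 2 * ((ξ + 1) * f ξ)
        ring
      · rw [if_neg (not_le.mpr h')]
        show _ = (x + 1) / 2 * ((ξ - 1) * f ξ)
        ring
    · rw [if_neg (not_le.mpr h), if_pos h.le]
      show _ = (x - 1) / 2 * ((ξ + 1) * f ξ)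
      ring
  -- y equals the nice expression on Icc
  have yeq : ∀ x ∈ Icc (-1 : ℝ) 1, y x = (x - 1) / 2 * A x + (x + 1) / 2 * B x := by
    intro x hx
    have hx1 : (-1 : ℝ) ≤ x := hx.1
    have hx2 : x ≤ (1 : ℝ) := hx.2
    have hc1 : ContinuousOn (fun ξ => greenG x ξ * f ξ) (Icc (-1 : ℝ) x) := by
      apply ContinuousOn.congr
        (f := fun ξ => (x - 1) / 2 * g1 ξ)
        ((continuousOn_const.mul (hg1.mono (Icc_subset_Icc le_rfl hx2))))
      intro ξ hξ
      show greenG x ξ * f ξ = (x - 1) / 2 * g1 ξ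
      rw [hG x ξ, if_pos hξ.2]
    have hc2 : ContinuousOn (fun ξ => greenG x ξ * f ξ) (Icc x (1 : ℝ)) := by
      apply ContinuousOn.congr
        (f := fun ξ => (x + 1) / 2 * g2 ξ)
        ((continuousOn_const.mul (hg2.mono (Icc_subset_Icc hx1 le_rfl))))
      intro ξ hξ
      show greenG x ξ * f ξ = (x + 1) / 2 * g2 ξ
      rcases eq_or_lt_of_le hξ.1 with h | h
      · rw [hG x ξ, ← h, if_pos le_rfl]
        show (x - 1) / 2 * ((x + 1) * f x) = (x + 1) / 2 * ((x - 1) * f x)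
        ring
      · rw [hG x ξ, if_neg (not_le.mpr h)]
    have hi1 : IntervalIntegrable (fun ξ => greenG x ξ * f ξ) volume (-1) x := by
      apply ContinuousOn.intervalIntegrable
      rwa [uIcc_of_le hx1]
    have hi2 : IntervalIntegrable (fun ξ => greenG x ξ * f ξ) volume x 1 := by
      apply ContinuousOn.intervalIntegrable
      rwa [uIcc_of_le hx2]
    have hsplit := intervalIntegral.integral_add_adjacent_intervals hi1 hi2
    have e1 : (∫ ξ in (-1 : ℝ)..x, greenG x ξ * f ξ) = (x - 1) / 2 * A x := by
      rw [show (x - 1) / 2 * A x = ∫ ξ in (-1 : ℝ)..x, (x - 1) / 2 * g1 ξ from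
        (intervalIntegral.integral_const_mul _ _).symm]
      apply intervalIntegral.integral_congr
      intro ξ hξ
      rw [uIcc_of_le hx1] at hξ
      show greenG x ξ * f ξ = (x - 1) / 2 * g1 ξ
      rw [hG x ξ, if_pos hξ.2]
    have e2 : (∫ ξ in x..(1 : ℝ), greenG x ξ * f ξ) = (x + 1) / 2 * B x := by
      rw [show (x + 1) / 2 * B x = ∫ ξ in x..(1 : ℝ), (x + 1) / 2 * g2 ξ from
        (intervalIntegral.integral_const_mul _ _).symm]
      apply intervalIntegral.integral_congr
      intro ξ hξ
      rw [uIcc_of_le hx2] at hξ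
      show greenG x ξ * f ξ = (x + 1) / 2 * g2 ξ
      rcases eq_or_lt_of_le hξ.1 with h | h
      · rw [hG x ξ, ← h, if_pos le_rfl]
        show (x - 1) / 2 * ((x + 1) * f x) = (x + 1) / 2 * ((x - 1) * f x)
        ring
      · rw [hG x ξ, if_neg (not_le.mpr h)]
    rw [hy x, ← hsplit, e1, e2]
  refine ⟨?_, ?_, fun t => (A t + B t) / 2, ?_, ?_⟩
  · have := yeq (-1) (by constructor <;> norm_num)
    simp only [hAdef] at this
    rw [this]
    simp [intervalIntegral.integral_same]
  · have := yeq 1 (by constructor <;> norm_num)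
    simp only [hBdef] at this
    rw [this]
    simp [intervalIntegral.integral_same]
  · intro x hx
    have hmem : Icc (-1 : ℝ) 1 ∈ nhds x := Icc_mem_nhds hx.1 hx.2
    have hA : HasDerivAt A (g1 x) x := by
      apply intervalIntegral.integral_hasDerivAt_right
      · apply (hg1.mono _).intervalIntegrable
        rw [uIcc_of_le hx.1.le]
        exact Icc_subset_Icc le_rfl hx.2.le
      · exact ⟨Icc (-1 : ℝ) 1, hmem, hg1.aestronglyMeasurable measurableSet_Icc⟩
      · exact hg1.continuousAt hmem
    have hB : HasDerivAt B (-(g2 x)) x := by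
      apply intervalIntegral.integral_hasDerivAt_left
      · apply (hg2.mono _).intervalIntegrable
        rw [uIcc_of_le hx.2.le]
        exact Icc_subset_Icc hx.1.le le_rfl
      · exact ⟨Icc (-1 : ℝ) 1, hmem, hg2.aestronglyMeasurable measurableSet_Icc⟩
      · exact hg2.continuousAt hmem
    have h1 : HasDerivAt (fun t : ℝ => (t - 1) / 2) (1 / 2) x := by
      simpa using ((hasDerivAt_id x).sub_const 1).div_const 2
    have h2 : HasDerivAt (fun t : ℝ => (t + 1) / 2) (1 / 2) x := by
      simpa using ((hasDerivAt_id x).add_const 1).div_const 2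
    have hY : HasDerivAt (fun t => (t - 1) / 2 * A t + (t + 1) / 2 * B t)
        ((1 / 2 * A x + (x - 1) / 2 * g1 x) + (1 / 2 * B x + (x + 1) / 2 * (-(g2 x)))) x :=
      (h1.mul hA).add (h2.mul hB)
    have heq : y =ᶠ[nhds x] fun t => (t - 1) / 2 * A t + (t + 1) / 2 * B t :=
      Filter.eventuallyEq_of_mem hmem fun t ht => yeq t ht
    have := hY.congr_of_eventuallyEq heq
    convert this using 1
    show (A x + B x) / 2 = 1 / 2 * A x + (x - 1) / 2 * ((x + 1) * f x) + (1 / 2 * B x + (x + 1) / 2 * -((x - 1) * f x))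
    ring
    all_goals rfl
  · intro x hx
    have hmem : Icc (-1 : ℝ) 1 ∈ nhds x := Icc_mem_nhds hx.1 hx.2
    have hA : HasDerivAt A (g1 x) x := by
      apply intervalIntegral.integral_hasDerivAt_right
      · apply (hg1.mono _).intervalIntegrable
        rw [uIcc_of_le hx.1.le]
        exact Icc_subset_Icc le_rfl hx.2.le
      · exact ⟨Icc (-1 : ℝ) 1, hmem, hg1.aestronglyMeasurable measurableSet_Icc⟩
      · exact hg1.continuousAt hmem
    have hB : HasDerivAt B (-(g2 x)) x := by
      apply intervalIntegral.integral_hasDerivAt_left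
      · apply (hg2.mono _).intervalIntegrable
        rw [uIcc_of_le hx.2.le]
        exact Icc_subset_Icc hx.1.le le_rfl
      · exact ⟨Icc (-1 : ℝ) 1, hmem, hg2.aestronglyMeasurable measurableSet_Icc⟩
      · exact hg2.continuousAt hmem
    have := (hA.add hB).div_const 2
    convert this using 1
    show f x = ((x + 1) * f x + -((x - 1) * f x)) / 2
    ring
    all_goals rfl
end

section
/- Let N ≥ 1 and let p be a real polynomial of degree at most N with p(-1) = p(1) = 0. Then for every k = 0,…,N, Σ_{i=0}^{N} G_{ki} p''(x_i) = p(x_k); that is, the Green matrix acts as a left inverse of the second derivative on polynomials of degree at most N satisfying the zero Dirichlet boundary conditions. -/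
open Polynomial intervalIntegral

/-- The Chebyshev–Gauss–Lobatto points `x_j = cos (j π / N)`. -/
noncomputable def chebNode (N j : ℕ) : ℝ := Real.cos (j * Real.pi / N)

lemma greenG_cont (x : ℝ) : Continuous (greenG x) := by
  unfold greenG
  apply Continuous.if_le (by fun_prop) (by fun_prop) continuous_const continuous_id
  intro ξ h
  simp only [id] at h
  rw [← h]; ring

lemma poly_ftc (q : Polynomial ℝ) (a b : ℝ) :
    ∫ x in a..b, (Polynomial.derivative q).eval x = q.eval b - q.eval a := by
  apply intervalIntegral.integral_eq_sub_of_hasDerivAt (fun x _ => q.hasDerivAt x)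
  exact ((Polynomial.derivative q).continuous_aeval).intervalIntegrable a b

lemma green_integral (p : Polynomial ℝ) (x : ℝ) (hx₁ : (-1:ℝ) ≤ x) (hx₂ : x ≤ 1)
    (h1 : p.eval (-1 : ℝ) = 0) (h2 : p.eval (1 : ℝ) = 0) :
    ∫ ξ in (-1:ℝ)..1,
      greenG x ξ * (Polynomial.derivative (Polynomial.derivative p)).eval ξ = p.eval x := by
  set q := Polynomial.derivative p with hq
  set r := Polynomial.derivative q with hr
  set g : Polynomial ℝ := (Polynomial.X + 1) * q - p with hg
  set h : Polynomial ℝ := (Polynomial.X - 1) * q - p with hh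
  have hdg : Polynomial.derivative g = (Polynomial.X + 1) * r := by
    simp [hg, hr, hq, mul_comm]
  have hdh : Polynomial.derivative h = (Polynomial.X - 1) * r := by
    simp [hh, hr, hq, mul_comm]
  have hsplit : ∫ ξ in (-1:ℝ)..1, greenG x ξ * r.eval ξ =
      (∫ ξ in (-1:ℝ)..x, greenG x ξ * r.eval ξ) +
      ∫ ξ in x..1, greenG x ξ * r.eval ξ := by
    rw [intervalIntegral.integral_add_adjacent_intervals] <;>
      exact ((greenG_cont x).mul r.continuous_aeval).intervalIntegrable _ _
  have h₁ : ∫ ξ in (-1:ℝ)..x, greenG x ξ * r.eval ξ =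
      (x - 1) / 2 * (g.eval x - g.eval (-1)) := by
    rw [← poly_ftc g (-1) x, ← intervalIntegral.integral_const_mul]
    apply intervalIntegral.integral_congr
    intro ξ hξ
    rw [Set.uIcc_of_le hx₁] at hξ
    rw [hdg]
    simp only [Polynomial.eval_mul, Polynomial.eval_add, Polynomial.eval_X, Polynomial.eval_one]
    unfold greenG
    split_ifs with hc
    · have hxe : ξ = x := le_antisymm hξ.2 hc
      subst hxe; ring
    · ring
  have h₂ : ∫ ξ in x..1, greenG x ξ * r.eval ξ =
      (x + 1) / 2 * (h.eval 1 - h.eval x) := by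
    rw [← poly_ftc h x 1, ← intervalIntegral.integral_const_mul]
    apply intervalIntegral.integral_congr
    intro ξ hξ
    rw [Set.uIcc_of_le hx₂] at hξ
    rw [hdh]
    simp only [Polynomial.eval_mul, Polynomial.eval_sub, Polynomial.eval_X, Polynomial.eval_one]
    unfold greenG
    rw [if_pos hξ.1]
    ring
  have hgx : g.eval x = (x + 1) * q.eval x - p.eval x := by simp [hg]
  have hgm : g.eval (-1 : ℝ) = 0 := by simp [hg, h1]
  have hhx : h.eval x = (x - 1) * q.eval x - p.eval x := by simp [hh]
  have hh1 : h.eval (1 : ℝ) = 0 := by simp [hh, h2]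
  rw [hsplit, h₁, h₂, hgx, hgm, hhx, hh1]
  ring

theorem stmt_10 (N : ℕ) (hN : 1 ≤ N) (l : Fin (N + 1) → Polynomial ℝ)
    (hdeg : ∀ i, (l i).degree ≤ N)
    (heval : ∀ i j : Fin (N + 1),
      (l i).eval (chebNode N j) = if i = j then 1 else 0)
    (p : Polynomial ℝ) (hp : p.degree ≤ N)
    (hbc₁ : p.eval (-1 : ℝ) = 0) (hbc₂ : p.eval (1 : ℝ) = 0) :
    ∀ k : Fin (N + 1),
      (∑ i : Fin (N + 1),
        (∫ ξ in (-1 : ℝ)..1, greenG (chebNode N k) ξ * (l i).eval ξ)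
          * (Polynomial.derivative (Polynomial.derivative p)).eval (chebNode N i))
        = p.eval (chebNode N k) := by
  intro k
  set x := chebNode N k with hxdef
  have hx₁ : (-1:ℝ) ≤ x := Real.neg_one_le_cos _
  have hx₂ : x ≤ 1 := Real.cos_le_one _
  set r := Polynomial.derivative (Polynomial.derivative p) with hrdef
  have hNpos : (0:ℝ) < N := by
    have : (1:ℝ) ≤ N := by exact_mod_cast hN
    linarith
  have pi_pos := Real.pi_pos
  -- injectivity of the nodes
  have hinj : Set.InjOn (fun i : Fin (N+1) => chebNode N i)
      ↑(Finset.univ : Finset (Fin (N+1))) := by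
    intro i _ j _ hij
    have hb : ∀ m : Fin (N+1), (m : ℝ) * Real.pi / N ∈ Set.Icc 0 Real.pi := by
      intro m
      have hm : (m : ℝ) ≤ N := by
        have := Nat.lt_succ_iff.mp m.isLt
        exact_mod_cast this
      constructor
      · positivity
      · rw [div_le_iff₀ hNpos]
        nlinarith
    have := Real.injOn_cos (hb i) (hb j) hij
    have hieq : (i : ℝ) = j := by
      rw [div_left_inj' hNpos.ne', mul_left_inj' pi_pos.ne'] at this
      exact this
    have : (i : ℕ) = j := by exact_mod_cast hieq
    exact Fin.ext this
  -- degree bound for r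
  have hrdeg : r.degree ≤ (N : WithBot ℕ) :=
    le_trans (le_trans Polynomial.degree_derivative_le Polynomial.degree_derivative_le) hp
  have hcard : ((Finset.univ : Finset (Fin (N+1))).card : WithBot ℕ) = ((N + 1 : ℕ) : WithBot ℕ) := by
    simp
  have hltcard : (N : WithBot ℕ) < ((Finset.univ : Finset (Fin (N+1))).card : WithBot ℕ) := by
    rw [hcard]
    exact_mod_cast Nat.lt_succ_self N
  -- interpolation identity
  have hrident : r = ∑ i : Fin (N+1), Polynomial.C (r.eval (chebNode N i)) * l i := by
    apply Polynomial.eq_of_degrees_lt_of_eval_index_eq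
      (v := fun i : Fin (N+1) => chebNode N i) Finset.univ hinj
    · exact lt_of_le_of_lt hrdeg hltcard
    · refine lt_of_le_of_lt (Polynomial.degree_sum_le _ _) ?_
      refine lt_of_le_of_lt (Finset.sup_le fun i _ => ?_) hltcard
      exact le_trans (Polynomial.degree_mul_le _ _)
        (le_trans (add_le_add Polynomial.degree_C_le (hdeg i)) (by simp))
    · intro j _
      simp only [Polynomial.eval_finset_sum, Polynomial.eval_mul, Polynomial.eval_C, heval,
        mul_ite, mul_one, mul_zero]
      rw [Finset.sum_ite_eq' Finset.univ j]
      simp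
  have hterm : ∀ i : Fin (N+1),
      (∫ ξ in (-1:ℝ)..1, greenG x ξ * (l i).eval ξ) * r.eval (chebNode N i)
      = ∫ ξ in (-1:ℝ)..1, greenG x ξ * (Polynomial.C (r.eval (chebNode N i)) * l i).eval ξ := by
    intro i
    rw [← intervalIntegral.integral_mul_const]
    apply intervalIntegral.integral_congr
    intro ξ _
    simp only [Polynomial.eval_mul, Polynomial.eval_C]
    ring
  calc (∑ i : Fin (N+1),
        (∫ ξ in (-1:ℝ)..1, greenG x ξ * (l i).eval ξ) * r.eval (chebNode N i))
      = ∑ i : Fin (N+1),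
        ∫ ξ in (-1:ℝ)..1, greenG x ξ * (Polynomial.C (r.eval (chebNode N i)) * l i).eval ξ :=
        Finset.sum_congr rfl fun i _ => hterm i
    _ = ∫ ξ in (-1:ℝ)..1,
        ∑ i : Fin (N+1), greenG x ξ * (Polynomial.C (r.eval (chebNode N i)) * l i).eval ξ := by
        rw [intervalIntegral.integral_finset_sum]
        intro i _
        exact ((greenG_cont x).mul (by fun_prop)).intervalIntegrable _ _
    _ = ∫ ξ in (-1:ℝ)..1, greenG x ξ * r.eval ξ := by
        apply intervalIntegral.integral_congr
        intro ξ _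
        dsimp only
        rw [← Finset.mul_sum, ← Polynomial.eval_finset_sum, ← hrident]
    _ = p.eval x := green_integral p x hx₁ hx₂ hbc₁ hbc₂
end

section
/- The Green matrix is centrosymmetric: for all k, i = 0,…,N, G_{(N-k)(N-i)} = G_{ki}. -/
lemma greenG_neg_neg (x ξ : ℝ) : greenG (-x) (-ξ) = greenG x ξ := by
  unfold greenG
  split_ifs with h1 h2 h2 <;> [skip; skip; skip; linarith] <;> ring_nf <;> nlinarith

lemma chebNode_rev (N : ℕ) (hN : 1 ≤ N) (j : Fin (N + 1)) :
    chebNode N j.rev = - chebNode N j := by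
  have hj : (j : ℕ) ≤ N := Nat.lt_succ_iff.mp j.isLt
  have hrev : ((j.rev : Fin (N + 1)) : ℕ) = N - j := by
    simp [Fin.val_rev]
  unfold chebNode
  rw [hrev]
  have hNpos : (0 : ℝ) < N := by exact_mod_cast hN
  have hcast : ((N - (j : ℕ) : ℕ) : ℝ) = (N : ℝ) - j := by
    push_cast [Nat.cast_sub hj]; ring
  rw [hcast, ← Real.cos_pi_sub]
  congr 1
  field_simp

lemma chebNode_injOn (N : ℕ) (hN : 1 ≤ N) :
    Set.InjOn (fun j : Fin (N + 1) => chebNode N j) Set.univ := by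
  intro a _ b _ hab
  have hπ := Real.pi_pos
  have hNpos : (0 : ℝ) < N := by exact_mod_cast hN
  have hmem : ∀ c : Fin (N + 1), (c : ℝ) * Real.pi / N ∈ Set.Icc 0 Real.pi := by
    intro c
    have hc : (c : ℝ) ≤ N := by exact_mod_cast Nat.lt_succ_iff.mp c.isLt
    constructor
    · positivity
    · rw [div_le_iff₀ hNpos]
      nlinarith [Nat.cast_nonneg (c : ℕ) (α := ℝ)]
  have := Real.injOn_cos (hmem a) (hmem b) hab
  have h2 : (((a : ℕ) : ℝ)) = ((b : ℕ) : ℝ) := by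
    have h' : ((a : ℕ) : ℝ) * Real.pi / N = ((b : ℕ) : ℝ) * Real.pi / N := this
    rw [div_left_inj' hNpos.ne', mul_left_inj' hπ.ne'] at h'
    exact h'
  exact Fin.ext (by exact_mod_cast h2)

theorem stmt_11 (N : ℕ) (hN : 1 ≤ N) (l : Fin (N + 1) → Polynomial ℝ)
    (hdeg : ∀ i, (l i).degree ≤ N)
    (heval : ∀ i j : Fin (N + 1),
      (l i).eval (chebNode N j) = if i = j then 1 else 0) :
    ∀ k i : Fin (N + 1),
      (∫ ξ in (-1 : ℝ)..1, greenG (chebNode N k.rev) ξ * (l i.rev).eval ξ)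
        = ∫ ξ in (-1 : ℝ)..1, greenG (chebNode N k) ξ * (l i).eval ξ := by
  intro k i
  -- Step 1: l i.rev = (l i).comp (-X)
  have hcomp : l i.rev = (l i).comp (-Polynomial.X) := by
    apply Polynomial.eq_of_degrees_lt_of_eval_index_eq (v := fun j : Fin (N+1) => chebNode N j)
      Finset.univ
    · intro a _ b _ hab
      exact chebNode_injOn N hN (Set.mem_univ a) (Set.mem_univ b) hab
    · calc (l i.rev).degree ≤ (N : ℕ) := hdeg _
        _ < (Finset.univ : Finset (Fin (N+1))).card := by
            rw [Finset.card_univ, Fintype.card_fin]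
            exact_mod_cast Nat.lt_succ_self N
    · have h1 : ((l i).comp (-Polynomial.X)).natDegree ≤ N := by
        rw [Polynomial.natDegree_comp, Polynomial.natDegree_neg, Polynomial.natDegree_X, mul_one]
        exact Polynomial.natDegree_le_iff_degree_le.mpr (hdeg i)
      calc ((l i).comp (-Polynomial.X)).degree
          ≤ (((l i).comp (-Polynomial.X)).natDegree : WithBot ℕ) :=
            Polynomial.degree_le_natDegree
        _ ≤ ((N : ℕ) : WithBot ℕ) := by exact_mod_cast h1
        _ < (Finset.univ : Finset (Fin (N+1))).card := by
            rw [Finset.card_univ, Fintype.card_fin]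
            exact_mod_cast Nat.lt_succ_self N
    · intro j _
      rw [Polynomial.eval_comp]
      simp only [Polynomial.eval_neg, Polynomial.eval_X]
      rw [← chebNode_rev N hN j, heval, heval]
      congr 1
      simp only [eq_iff_iff]
      constructor
      · rintro rfl; simp
      · rintro rfl; simp
  -- Step 2: rewrite the integrand and substitute ξ ↦ -ξ
  rw [hcomp, chebNode_rev N hN k]
  have hfun : ∀ ξ : ℝ,
      greenG (-chebNode N k) ξ * ((l i).comp (-Polynomial.X)).eval ξ
        = greenG (chebNode N k) (-ξ) * (l i).eval (-ξ) := by
    intro ξ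
    rw [Polynomial.eval_comp]
    simp only [Polynomial.eval_neg, Polynomial.eval_X]
    congr 1
    rw [← greenG_neg_neg (chebNode N k) (-ξ), neg_neg]
  simp only [hfun]
  rw [intervalIntegral.integral_comp_neg (fun ξ => greenG (chebNode N k) ξ * (l i).eval ξ)]
  norm_num
end

section
/- Let N ≥ 1. The barycentric weights of the Chebyshev–Gauss–Lobatto points, λ_j = 1/∏_{k≠j} (x_j − x_k), satisfy λ_j = (-1)^j 2^{N-1}/N for j = 1,…,N-1, and λ_0 = 2^{N-2}/N, λ_N = (-1)^N 2^{N-2}/N (i.e. the values at j = 0 and j = N carry an extra factor 1/2). -/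
open Finset Real


lemma abs_one_sub_exp (θ : ℝ) :
    ‖1 - Complex.exp (2 * θ * Complex.I)‖ = 2 * |Real.sin θ| := by
  have key : (1 : ℂ) - Complex.exp (2 * θ * Complex.I)
      = Complex.sin θ * (-2 * Complex.I * Complex.exp (θ * Complex.I)) := by
    rw [Complex.sin]
    have h1 : Complex.exp (-(θ:ℂ) * Complex.I) * Complex.exp ((θ:ℂ) * Complex.I) = 1 := by
      rw [← Complex.exp_add]; ring_nf; exact Complex.exp_zero
    have h2 : Complex.exp ((θ:ℂ) * Complex.I) * Complex.exp ((θ:ℂ) * Complex.I)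
        = Complex.exp (2 * θ * Complex.I) := by
      rw [← Complex.exp_add]; ring_nf
    have hI : Complex.I ^ 2 = -1 := Complex.I_sq
    linear_combination Complex.I ^ 2 * h1 - Complex.I ^ 2 * h2
      + (1 - Complex.exp (2 * θ * Complex.I)) * hI
  rw [key, norm_mul, norm_mul, norm_mul, ← Complex.ofReal_sin, Complex.norm_real,
    Complex.norm_exp_ofReal_mul_I]
  simp [mul_comm]

lemma sin_prod (n : ℕ) (hn : 1 ≤ n) :
    ∏ k ∈ range (n - 1), Real.sin ((k + 1) * π / n) = n / 2 ^ (n - 1) := by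
  obtain ⟨m, rfl⟩ : ∃ m, n = m + 1 := ⟨n - 1, by omega⟩
  have hprim := Complex.isPrimitiveRoot_exp (m + 1) (by omega)
  have h := hprim.prod_one_sub_pow_eq_order
  have habs := congrArg (‖·‖) h
  rw [Complex.norm_prod] at habs
  push_cast at habs
  have hm0 : ((m:ℂ) + 1) ≠ 0 := by
    exact_mod_cast Nat.succ_ne_zero m
  have hfac : ∀ k ∈ range m, ‖1 - Complex.exp (2 * π * Complex.I / ((m:ℂ)+1)) ^ (k+1)‖
      = 2 * Real.sin ((k + 1) * π / (m+1)) := by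
    intro k hk
    rw [← Complex.exp_nat_mul]
    have harg : ((k+1 : ℕ):ℂ) * (2 * π * Complex.I / ((m:ℂ)+1))
        = 2 * (((k+1) * π / (m+1) : ℝ) : ℂ) * Complex.I := by
      push_cast
      field_simp
    rw [harg, abs_one_sub_exp, abs_of_nonneg]
    apply Real.sin_nonneg_of_nonneg_of_le_pi
    · positivity
    · rw [div_le_iff₀ (by positivity)]
      have hk' : (k:ℝ) + 1 ≤ m := by
        have := mem_range.mp hk; exact_mod_cast Nat.succ_le_of_lt this
      nlinarith [Real.pi_pos, Nat.cast_nonneg (α := ℝ) m]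
  rw [prod_congr rfl hfac] at habs
  have habs' : ∏ k ∈ range m, (2 * Real.sin ((k + 1) * π / (m+1))) = (m + 1 : ℝ) := by
    rw [habs, show ((m:ℂ) + 1) = ((m+1 : ℕ) : ℂ) by push_cast; ring, Complex.norm_natCast]
    push_cast; ring
  rw [prod_mul_distrib, prod_const, card_range] at habs'
  simp only [Nat.add_sub_cancel]
  push_cast
  rw [eq_div_iff (by positivity), mul_comm]
  exact habs'

lemma sin_reflect (N m : ℕ) (hm : m ≤ 2*N) :
    Real.sin (((2*N - m : ℕ) : ℝ) * π / (2*N)) = Real.sin (m * π / (2*N)) := by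
  rcases Nat.eq_zero_or_pos N with h | h
  · subst h; simp
  have hN : (2*N : ℝ) ≠ 0 := by positivity
  rw [show (((2*N - m : ℕ) : ℝ) * π / (2*N)) = π - m * π / (2*N) by
    rw [Nat.cast_sub hm]; push_cast; field_simp]
  exact Real.sin_pi_sub _

lemma sin_half (N : ℕ) (hN : 1 ≤ N) : Real.sin ((N:ℝ) * π / (2*N)) = 1 := by
  rw [show (N:ℝ) * π / (2*N) = π / 2 by
    have : (N:ℝ) ≠ 0 := by positivity
    field_simp]
  exact Real.sin_pi_div_two

lemma sin_pos' (N m : ℕ) (h1 : 1 ≤ m) (h2 : m ≤ 2*N - 1) :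
    0 < Real.sin ((m:ℝ) * π / (2*N)) := by
  have hN : 1 ≤ N := by omega
  apply Real.sin_pos_of_pos_of_lt_pi
  · have : (0:ℝ) < m := by exact_mod_cast h1
    positivity
  · rw [div_lt_iff₀ (by positivity)]
    have hm : (m:ℝ) ≤ 2*N - 1 := by
      have h3 : (m:ℝ) ≤ ((2*N - 1 : ℕ):ℝ) := by exact_mod_cast h2
      rw [Nat.cast_sub (by omega)] at h3; push_cast at h3; linarith
    nlinarith [Real.pi_pos]

lemma reflect_Ico (N : ℕ) (hN : 1 ≤ N) :
    ∏ k ∈ Ico (N+1) (2*N), Real.sin ((k:ℝ) * π / (2*N))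
      = ∏ k ∈ Ico 1 N, Real.sin ((k:ℝ) * π / (2*N)) := by
  have hrefl := prod_range_reflect (fun j => Real.sin (((1+j : ℕ):ℝ) * π / (2*N))) (N-1)
  rw [prod_Ico_eq_prod_range, prod_Ico_eq_prod_range]
  have h2 : 2*N - (N+1) = N - 1 := by omega
  rw [h2, ← hrefl]
  apply prod_congr rfl
  intro i hi
  have hi' := mem_range.mp hi
  show Real.sin (((N+1+i : ℕ):ℝ) * π / (2*N)) = Real.sin (((1 + (N-1-1-i) : ℕ):ℝ) * π / (2*N))
  rw [show 1 + (N - 1 - 1 - i) = 2*N - (N+1+i) by omega]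
  exact (sin_reflect N (N+1+i) (by omega)).symm

lemma sq_sin_prod (N : ℕ) (hN : 1 ≤ N) :
    (∏ k ∈ Ico 1 N, Real.sin ((k:ℝ) * π / (2*N)))^2 = N / 4^(N-1) := by
  have h0 := sin_prod (2*N) (by omega)
  push_cast at h0
  have h1 : ∏ k ∈ Ico 1 (2*N), Real.sin ((k:ℝ) * π/(2*N)) = 2*N/2^(2*N-1) := by
    rw [prod_Ico_eq_prod_range, ← h0]
    apply prod_congr rfl
    intro k _
    congr 1
    push_cast; ring
  rw [← prod_Ico_consecutive (fun k : ℕ => Real.sin ((k:ℝ) * π/(2*N))) (by omega : 1 ≤ N)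
    (by omega : N ≤ 2*N)] at h1
  rw [Finset.prod_eq_prod_Ico_succ_bot (by omega : N < 2*N)] at h1
  rw [sin_half N hN, one_mul, reflect_Ico N hN] at h1
  have h4 : (2*N : ℝ)/2^(2*N-1) = N/4^(N-1) := by
    have hp : (2:ℝ)^(2*N-1) = 2 * 4^(N-1) := by
      rw [show 2*N-1 = 2*(N-1)+1 by omega, pow_succ, pow_mul]
      norm_num; ring
    rw [hp]
    have h40 : (4:ℝ)^(N-1) ≠ 0 := by positivity
    field_simp
  rw [sq, h1, h4]

lemma reflect_IcoG (N a b : ℕ) (hab : a ≤ b) (hb : b ≤ 2*N) :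
    ∏ k ∈ Ico a b, Real.sin ((k:ℝ) * π / (2*N))
      = ∏ k ∈ Ico (2*N+1-b) (2*N+1-a), Real.sin ((k:ℝ) * π / (2*N)) := by
  have hrefl := prod_range_reflect
    (fun i => Real.sin (((2*N+1-b+i : ℕ):ℝ) * π / (2*N))) (b-a)
  rw [prod_Ico_eq_prod_range, prod_Ico_eq_prod_range,
    show 2*N+1-a - (2*N+1-b) = b - a by omega, ← hrefl]
  apply prod_congr rfl
  intro i hi
  have hi' := mem_range.mp hi
  show Real.sin (((a+i : ℕ):ℝ) * π / (2*N))
      = Real.sin (((2*N+1-b + (b-a-1-i) : ℕ):ℝ) * π / (2*N))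
  rw [show 2*N+1-b + (b-a-1-i) = 2*N - (a+i) by omega]
  exact (sin_reflect N (a+i) (by omega)).symm

lemma prod_erase_split (N j : ℕ) (hj : j ≤ N) (f : ℕ → ℝ) :
    ∏ k ∈ (range (N+1)).erase j, f k
      = (∏ k ∈ range j, f k) * ∏ i ∈ range (N - j), f (j + 1 + i) := by
  have hset : (range (N+1)).erase j = range j ∪ Ico (j+1) (N+1) := by
    ext k
    simp only [Finset.mem_erase, Finset.mem_range, Finset.mem_union, Finset.mem_Ico]
    omega
  have hdisj : Disjoint (range j) (Ico (j+1) (N+1)) := by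
    simp only [Finset.disjoint_left, Finset.mem_range, Finset.mem_Ico]
    omega
  rw [hset, prod_union hdisj, prod_Ico_eq_prod_range,
    show N+1-(j+1) = N - j by omega]

lemma cheb_diff_lt (N j k : ℕ) (hN : 1 ≤ N) (hk : k < j) :
    chebNode N j - chebNode N k
      = -(2 * Real.sin (((j+k : ℕ):ℝ) * π / (2*N)) * Real.sin (((j-k : ℕ):ℝ) * π / (2*N))) := by
  unfold chebNode
  rw [Real.cos_sub_cos]
  have hN' : (N:ℝ) ≠ 0 := by positivity
  rw [show ((j:ℝ)*π/N + (k:ℝ)*π/N)/2 = ((j+k:ℕ):ℝ)*π/(2*N) by push_cast; field_simp,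
    show ((j:ℝ)*π/N - (k:ℝ)*π/N)/2 = ((j-k:ℕ):ℝ)*π/(2*N) by
      rw [Nat.cast_sub (le_of_lt hk)]; push_cast; field_simp]
  ring

lemma cheb_diff_gt (N j i : ℕ) (hN : 1 ≤ N) :
    chebNode N j - chebNode N (j+1+i)
      = 2 * Real.sin (((2*j+1+i : ℕ):ℝ) * π / (2*N)) * Real.sin (((i+1 : ℕ):ℝ) * π / (2*N)) := by
  unfold chebNode
  rw [Real.cos_sub_cos]
  have hN' : (N:ℝ) ≠ 0 := by positivity
  rw [show ((j:ℝ)*π/N + ((j+1+i : ℕ):ℝ)*π/N)/2 = ((2*j+1+i:ℕ):ℝ)*π/(2*N) by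
      push_cast; field_simp; ring,
    show ((j:ℝ)*π/N - ((j+1+i : ℕ):ℝ)*π/N)/2 = -(((i+1:ℕ):ℝ)*π/(2*N)) by
      push_cast; field_simp; ring,
    Real.sin_neg]
  ring

section
variable (N : ℕ)


lemma shift_range (a n : ℕ) :
    ∏ i ∈ range n, Real.sin (((a+i : ℕ):ℝ) * π / (2*(N:ℝ)))
      = ∏ k ∈ Ico a (a+n), Real.sin ((k:ℝ) * π / (2*(N:ℝ))) := by
  rw [prod_Ico_eq_prod_range, show a + n - a = n by omega]

lemma Q_zero (hN : 1 ≤ N) :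
    ∏ k ∈ (range (N+1)).erase 0, (chebNode N 0 - chebNode N k)
      = 2^N * ((N:ℝ) / 4^(N-1)) := by
  rw [prod_erase_split N 0 (by omega)]
  simp only [range_zero, prod_empty, one_mul, Nat.sub_zero]
  have e : ∀ i ∈ range N, chebNode N 0 - chebNode N (0+1+i)
      = 2 * Real.sin (((i+1:ℕ):ℝ) * π / (2*N)) ^ 2 := by
    intro i _
    rw [cheb_diff_gt N 0 i hN, show 2*0+1+i = i+1 by omega]
    ring
  rw [prod_congr rfl e, prod_mul_distrib, prod_const, card_range, prod_pow]
  congr 1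
  rw [show (∏ i ∈ range N, Real.sin (((i+1:ℕ):ℝ) * π / (2*(N:ℝ))))
      = ∏ k ∈ Ico 1 (1+N), Real.sin ((k:ℝ) * π / (2*(N:ℝ))) by
    rw [← shift_range N 1 N]; apply prod_congr rfl; intro i _; rw [show 1+i = i+1 by omega]]
  rw [show 1+N = N+1 by omega, prod_Ico_succ_top (by omega : 1 ≤ N), sin_half N hN,
    mul_one, sq_sin_prod N hN]

lemma Q_last (hN : 1 ≤ N) :
    ∏ k ∈ (range (N+1)).erase N, (chebNode N N - chebNode N k)
      = (-2)^N * ((N:ℝ) / 4^(N-1)) := by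
  rw [prod_erase_split N N (by omega)]
  simp only [Nat.sub_self, range_zero, prod_empty, mul_one]
  have e : ∀ k ∈ range N, chebNode N N - chebNode N k
      = -2 * (Real.sin (((N+k:ℕ):ℝ) * π / (2*N)) * Real.sin (((N-k:ℕ):ℝ) * π / (2*N))) := by
    intro k hk
    rw [cheb_diff_lt N N k hN (mem_range.mp hk)]; ring
  rw [prod_congr rfl e, prod_mul_distrib, prod_const, card_range, prod_mul_distrib]
  congr 1
  have h1 : ∏ k ∈ range N, Real.sin (((N+k:ℕ):ℝ) * π / (2*(N:ℝ)))
      = ∏ k ∈ Ico 1 N, Real.sin ((k:ℝ) * π / (2*(N:ℝ))) := by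
    rw [shift_range N N N, prod_eq_prod_Ico_succ_bot (by omega : N < N+N), sin_half N hN,
      one_mul, reflect_IcoG N (N+1) (N+N) (by omega) (by omega),
      show 2*N+1-(N+N) = 1 by omega, show 2*N+1-(N+1) = N by omega]
  have h2 : ∏ k ∈ range N, Real.sin (((N-k:ℕ):ℝ) * π / (2*(N:ℝ)))
      = ∏ k ∈ Ico 1 N, Real.sin ((k:ℝ) * π / (2*(N:ℝ))) := by
    have hrefl := prod_range_reflect
      (fun i => Real.sin (((i+1 : ℕ):ℝ) * π / (2*(N:ℝ)))) N
    have e2 : ∀ k ∈ range N, Real.sin (((N-k:ℕ):ℝ) * π / (2*(N:ℝ)))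
        = Real.sin (((N-1-k+1 : ℕ):ℝ) * π / (2*(N:ℝ))) := by
      intro k hk
      have := mem_range.mp hk
      rw [show N-1-k+1 = N-k by omega]
    rw [prod_congr rfl e2, hrefl,
      show (∏ i ∈ range N, Real.sin (((i+1:ℕ):ℝ) * π / (2*(N:ℝ))))
        = ∏ k ∈ Ico 1 (1+N), Real.sin ((k:ℝ) * π / (2*(N:ℝ))) by
      rw [← shift_range N 1 N]; apply prod_congr rfl; intro i _; rw [show 1+i = i+1 by omega],
      show 1+N = N+1 by omega, prod_Ico_succ_top (by omega : 1 ≤ N), sin_half N hN, mul_one]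
  rw [h1, h2, ← sq, sq_sin_prod N hN]

end

noncomputable def gS (N m : ℕ) : ℝ := Real.sin ((m:ℝ) * π / (2*(N:ℝ)))

lemma gS_reflectG (N a b : ℕ) (hab : a ≤ b) (hb : b ≤ 2*N) :
    ∏ k ∈ Ico a b, gS N k = ∏ k ∈ Ico (2*N+1-b) (2*N+1-a), gS N k :=
  reflect_IcoG N a b hab hb

lemma gS_shift (N a n : ℕ) :
    ∏ i ∈ range n, gS N (a+i) = ∏ k ∈ Ico a (a+n), gS N k := by
  rw [prod_Ico_eq_prod_range, show a + n - a = n by omega]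

lemma gS_one (N a : ℕ) (ha : 1 ≤ a) :
    ∏ i ∈ range a, gS N (i+1) = ∏ k ∈ Ico 1 (a+1), gS N k := by
  rw [show a+1 = 1+a by omega, ← gS_shift N 1 a]
  apply prod_congr rfl
  intro i _
  rw [show 1+i = i+1 by omega]

lemma Q_mid (N j : ℕ) (hj1 : 1 ≤ j) (hj2 : j < N) :
    ∏ k ∈ (range (N+1)).erase j, (chebNode N j - chebNode N k)
      = (-1)^j * ((N:ℝ) / 2^(N-1)) := by
  have hN : 1 ≤ N := by omega
  -- part 1
  have part1 : ∏ k ∈ range j, (chebNode N j - chebNode N k)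
      = (-2)^j * ((∏ k ∈ Ico j (2*j), gS N k) * ∏ k ∈ Ico 1 (j+1), gS N k) := by
    have e1 : ∀ k ∈ range j, chebNode N j - chebNode N k
        = -2 * (gS N (j+k) * gS N (j-k)) := by
      intro k hk
      rw [cheb_diff_lt N j k hN (mem_range.mp hk)]
      unfold gS
      push_cast
      ring
    rw [prod_congr rfl e1, prod_mul_distrib, prod_const, card_range, prod_mul_distrib]
    congr 1
    rw [show 2*j = j + j by omega, ← gS_shift N j j]
    congr 1
    have e2 : ∀ k ∈ range j, gS N (j-k) = gS N (j-1-k+1) := by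
      intro k hk
      have := mem_range.mp hk
      rw [show j-1-k+1 = j-k by omega]
    rw [prod_congr rfl e2, prod_range_reflect (fun i => gS N (i+1)) j, gS_one N j hj1]
  -- part 2
  have part2 : ∏ i ∈ range (N-j), (chebNode N j - chebNode N (j+1+i))
      = 2^(N-j) * ((∏ k ∈ Ico (2*j+1) (N+j+1), gS N k) * ∏ k ∈ Ico 1 (N-j+1), gS N k) := by
    have e1 : ∀ i ∈ range (N-j), chebNode N j - chebNode N (j+1+i)
        = 2 * (gS N (2*j+1+i) * gS N (i+1)) := by
      intro i _
      rw [cheb_diff_gt N j i hN]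
      unfold gS
      push_cast
      ring
    rw [prod_congr rfl e1, prod_mul_distrib, prod_const, card_range, prod_mul_distrib]
    congr 1
    rw [show N+j+1 = 2*j+1 + (N-j) by omega, ← gS_shift N (2*j+1) (N-j)]
    congr 1
    exact gS_one N (N-j) (by omega)
  -- combination facts
  have c4 : ∏ k ∈ Ico (N+1) (N+j+1), gS N k = ∏ k ∈ Ico (N-j) N, gS N k := by
    rw [gS_reflectG N (N+1) (N+j+1) (by omega) (by omega),
      show 2*N+1-(N+j+1) = N-j by omega, show 2*N+1-(N+1) = N by omega]
  have hc14 : (∏ k ∈ Ico j (2*j), gS N k) * gS N (2*j) * ∏ k ∈ Ico (2*j+1) (N+j+1), gS N k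
      = (∏ k ∈ Ico j (N+1), gS N k) * ∏ k ∈ Ico (N-j) N, gS N k := by
    rw [← Finset.prod_Ico_succ_top (by omega : j ≤ 2*j) (gS N),
      prod_Ico_consecutive (gS N) (by omega : j ≤ 2*j+1) (by omega : 2*j+1 ≤ N+j+1),
      ← prod_Ico_consecutive (gS N) (by omega : j ≤ N+1) (by omega : N+1 ≤ N+j+1), c4]
  have hB : (∏ k ∈ Ico 1 (j+1), gS N k) * ∏ k ∈ Ico j (N+1), gS N k
      = gS N j * ∏ k ∈ Ico 1 N, gS N k := by
    rw [Finset.prod_Ico_succ_top (by omega : 1 ≤ j) (gS N), mul_comm _ (gS N j), mul_assoc,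
      prod_Ico_consecutive (gS N) (by omega : 1 ≤ j) (by omega : j ≤ N+1),
      Finset.prod_Ico_succ_top (by omega : 1 ≤ N) (gS N),
      show gS N N = 1 from sin_half N hN, mul_one]
  have hD : (∏ k ∈ Ico 1 (N-j+1), gS N k) * ∏ k ∈ Ico (N-j) N, gS N k
      = gS N (N-j) * ∏ k ∈ Ico 1 N, gS N k := by
    rw [Finset.prod_Ico_succ_top (by omega : 1 ≤ N-j) (gS N), mul_comm _ (gS N (N-j)), mul_assoc,
      prod_Ico_consecutive (gS N) (by omega : 1 ≤ N-j) (by omega : N-j ≤ N)]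
  have hgj : gS N j ≠ 0 := (sin_pos' N j hj1 (by omega)).ne'
  have hgNj : gS N (N-j) ≠ 0 := (sin_pos' N (N-j) (by omega) (by omega)).ne'
  have hsin2 : gS N (2*j) = 2 * gS N j * gS N (N-j) := by
    unfold gS
    have h1 : ((2*j : ℕ):ℝ) * π / (2*(N:ℝ)) = 2 * ((j:ℝ) * π / (2*(N:ℝ))) := by
      push_cast; ring
    have h2 : ((N-j : ℕ):ℝ) * π / (2*(N:ℝ)) = π/2 - (j:ℝ) * π / (2*(N:ℝ)) := by
      rw [Nat.cast_sub (le_of_lt hj2)]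
      have : (N:ℝ) ≠ 0 := by positivity
      field_simp
    rw [h1, h2, Real.sin_two_mul, Real.sin_pi_div_two_sub]
  have hsq : (∏ k ∈ Ico 1 N, gS N k)^2 = N / 4^(N-1) := sq_sin_prod N hN
  have hS : (∏ k ∈ Ico j (2*j), gS N k) * (∏ k ∈ Ico 1 (j+1), gS N k)
      * ((∏ k ∈ Ico (2*j+1) (N+j+1), gS N k) * ∏ k ∈ Ico 1 (N-j+1), gS N k)
      = ((N:ℝ) / 4^(N-1))/2 := by
    apply mul_right_cancel₀ (b := 2 * gS N j * gS N (N-j))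
      (by simp only [mul_ne_zero_iff]; exact ⟨⟨two_ne_zero, hgj⟩, hgNj⟩)
    calc (∏ k ∈ Ico j (2*j), gS N k) * (∏ k ∈ Ico 1 (j+1), gS N k)
          * ((∏ k ∈ Ico (2*j+1) (N+j+1), gS N k) * ∏ k ∈ Ico 1 (N-j+1), gS N k)
          * (2 * gS N j * gS N (N-j))
        = (∏ k ∈ Ico j (2*j), gS N k) * (2 * gS N j * gS N (N-j))
            * (∏ k ∈ Ico (2*j+1) (N+j+1), gS N k)
            * ((∏ k ∈ Ico 1 (j+1), gS N k) * ∏ k ∈ Ico 1 (N-j+1), gS N k) := by ring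
      _ = (∏ k ∈ Ico j (2*j), gS N k) * gS N (2*j)
            * (∏ k ∈ Ico (2*j+1) (N+j+1), gS N k)
            * ((∏ k ∈ Ico 1 (j+1), gS N k) * ∏ k ∈ Ico 1 (N-j+1), gS N k) := by rw [← hsin2]
      _ = (∏ k ∈ Ico j (N+1), gS N k) * (∏ k ∈ Ico (N-j) N, gS N k)
            * ((∏ k ∈ Ico 1 (j+1), gS N k) * ∏ k ∈ Ico 1 (N-j+1), gS N k) := by rw [hc14]
      _ = ((∏ k ∈ Ico 1 (j+1), gS N k) * ∏ k ∈ Ico j (N+1), gS N k)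
            * ((∏ k ∈ Ico 1 (N-j+1), gS N k) * ∏ k ∈ Ico (N-j) N, gS N k) := by ring
      _ = (gS N j * ∏ k ∈ Ico 1 N, gS N k) * (gS N (N-j) * ∏ k ∈ Ico 1 N, gS N k) := by
            rw [hB, hD]
      _ = (∏ k ∈ Ico 1 N, gS N k)^2 * (gS N j * gS N (N-j)) := by ring
      _ = ((N:ℝ)/4^(N-1))/2 * (2 * gS N j * gS N (N-j)) := by rw [hsq]; ring
  -- final numeric computation
  rw [prod_erase_split N j (le_of_lt hj2), part1, part2,
    show ((-2:ℝ))^j * ((∏ k ∈ Ico j (2*j), gS N k) * ∏ k ∈ Ico 1 (j+1), gS N k)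
        * (2^(N-j) * ((∏ k ∈ Ico (2*j+1) (N+j+1), gS N k) * ∏ k ∈ Ico 1 (N-j+1), gS N k))
      = (-2:ℝ)^j * 2^(N-j)
        * ((∏ k ∈ Ico j (2*j), gS N k) * (∏ k ∈ Ico 1 (j+1), gS N k)
          * ((∏ k ∈ Ico (2*j+1) (N+j+1), gS N k) * ∏ k ∈ Ico 1 (N-j+1), gS N k)) by ring,
    hS, neg_pow]
  have hp1 : (2:ℝ)^j * 2^(N-j) = 2^(N-1) * 2 := by
    rw [← pow_add, show j + (N-j) = (N-1)+1 by omega, pow_succ]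
  have hp3 : (4:ℝ)^(N-1) = 2^(N-1) * 2^(N-1) := by
    rw [show (4:ℝ) = 2*2 by norm_num, mul_pow]
  have h2pos : (2:ℝ)^(N-1) ≠ 0 := by positivity
  rw [show (-1:ℝ)^j * 2^j * 2^(N-j) * ((N:ℝ)/4^(N-1)/2)
      = (-1)^j * ((2^j * 2^(N-j)) * ((N:ℝ)/4^(N-1)/2)) by ring,
    hp1, hp3]
  field_simp

theorem stmt_14 (N : ℕ) (hN : 1 ≤ N) (lam : ℕ → ℝ)
    (hlam : ∀ j ≤ N, lam j =
      (∏ k ∈ (Finset.range (N + 1)).erase j, (chebNode N j - chebNode N k))⁻¹) :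
    (∀ j : ℕ, 1 ≤ j → j ≤ N - 1 →
      lam j = (-1 : ℝ) ^ j * 2 ^ ((N : ℤ) - 1) / N) ∧
    lam 0 = 2 ^ ((N : ℤ) - 2) / N ∧
    lam N = (-1 : ℝ) ^ N * 2 ^ ((N : ℤ) - 2) / N := by
  have hN0 : (N:ℝ) ≠ 0 := Nat.cast_ne_zero.mpr (by omega)
  have h4 : ((4:ℝ)^(N-1)) ≠ 0 := by positivity
  have h2N : ((2:ℝ)^N) ≠ 0 := by positivity
  have hz2 : (2:ℝ)^((N:ℤ)-2) = 4^(N-1)/2^N := by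
    rw [show (4:ℝ)^(N-1) = 2^(2*N-2) by
        rw [show (4:ℝ) = 2^2 by norm_num, ← pow_mul]; congr 1; omega,
      ← zpow_natCast (2:ℝ) (2*N-2), ← zpow_natCast (2:ℝ) N,
      ← zpow_sub₀ (two_ne_zero)]
    congr 1
    omega
  refine ⟨?_, ?_, ?_⟩
  · intro j hj1 hjle
    have hj2 : j < N := by omega
    rw [hlam j (by omega), Q_mid N j hj1 hj2, mul_inv, ← inv_pow, inv_neg, inv_one, inv_div,
      show (2:ℝ)^((N:ℤ)-1) = 2^(N-1) by
        rw [show (N:ℤ)-1 = ((N-1:ℕ):ℤ) by omega, zpow_natCast]]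
    ring
  · rw [hlam 0 (by omega), Q_zero N hN, hz2]
    rw [mul_inv, inv_div]
    field_simp
  · rw [hlam N le_rfl, Q_last N hN, hz2, neg_pow, mul_inv, mul_inv, ← inv_pow, inv_neg,
      inv_one, inv_div]
    field_simp
end
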